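/- arXiv:q-bio/0402015 — 5 statements merged into one kernel-verified Lean document; each statement's English description precedes it below -/
import Mathlib

section
/- Let G = ℤ/2ℤ and let L : G → G be the identity labeling function (the Jukes-Cantor binary model in Fourier coordinates). For every binary rooted tree T, the ideal I_{T,L} is generated by homogeneous polynomials of degree 2. -/
open MvPolynomial

attribute [local instance] Classical.propDecidable

/-- A finite rooted tree, given by a parent function on a finite vertex set. -/
structure PhyloTree where
  V : Type
  fintypeV : Fintype V
  root : V
  parent : V → V
  parent_root : parent root = root
  reaches_root : ∀ v, ∃ n : ℕ, parent^[n] v = root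

attribute [instance] PhyloTree.fintypeV

namespace PhyloTree

variable (T : PhyloTree)

/-- A vertex is a leaf if it has no children. -/
def IsLeaf (v : T.V) : Prop := ∀ u, T.parent u = v → u = v

/-- The type of leaves of `T`. -/
def Leaf : Type := {v : T.V // T.IsLeaf v}

noncomputable instance : Fintype T.Leaf :=
  have : DecidablePred T.IsLeaf := Classical.decPred _
  Subtype.fintype _

/-- `u` is a (weak) descendant of `v`. -/
def Desc (u v : T.V) : Prop := ∃ n : ℕ, T.parent^[n] u = v

/-- The edges of `T` are indexed by its vertices: a vertex `v` indexes the edge from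
`parent v` to `v`, and the root indexes the extra pendant root edge `e_r`.
`leavesBelow v` is the set `Λ(e)` of leaves below the edge indexed by `v`. -/
noncomputable def leavesBelow (v : T.V) : Finset T.Leaf :=
  Finset.univ.filter fun l => T.Desc l.1 v

/-- `T` is a binary tree: every non-leaf vertex has exactly two children. -/
def IsBinary : Prop :=
  ∀ v : T.V, ¬ T.IsLeaf v →
    (Finset.univ.filter fun u => T.parent u = v ∧ u ≠ v).card = 2

variable {G 𝓛 : Type} [AddCommGroup G] [Fintype G]

/-- `g(e)`: the sum of the group elements at the leaves below the edge `e`. -/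
noncomputable def gsum (g : T.Leaf → G) (e : T.V) : G := ∑ l ∈ T.leavesBelow e, g l

/-- The monomial parameterization in Fourier coordinates:
`q_g ↦ ∏_{e ∈ E(T)} a^{(e)}_{L(g(e))}`. -/
noncomputable def Phi (L : G → 𝓛) :
    MvPolynomial (T.Leaf → G) ℂ →ₐ[ℂ] MvPolynomial (T.V × 𝓛) ℂ :=
  aeval fun g => ∏ e : T.V, X (e, L (T.gsum g e))

/-- The ideal `I_{T,L}` of phylogenetic invariants in Fourier coordinates. -/
noncomputable def idealTL (L : G → 𝓛) : Ideal (MvPolynomial (T.Leaf → G) ℂ) :=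
  RingHom.ker (T.Phi L)

end PhyloTree

/-!
The ideal is the kernel of a monomial map, so it is spanned by the binomials
`q^u - q^w` whose exponents lie in the same fibre. Such a binomial is a combination of quadrics
as soon as the two multisets of labellings `u` and `w` are joined by a chain of quadratic moves,
each replacing two labellings by two others with the same total edge statistics. For `ℤ/2ℤ`
and a binary tree a chain is built vertex by vertex from the root: if a labelling `g` already
agrees with a target `t` at `v`, then swapping the subtrees at `v` of `g` and of a labelling `x`
that has `t`'s values at both children of `v` is a quadratic move, and such an `x` exists
because over `ℤ/2ℤ` the value at `v` is the sum of the values at its two children, so the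
joint counts at the two children are determined by the edge counts.
-/

namespace MvPolynomial

section Toric

variable {σ τ : Type*} (R : Type*) [CommRing R]

noncomputable abbrev monomialMap (A : σ → τ →₀ ℕ) : MvPolynomial σ R →ₐ[R] MvPolynomial τ R :=
  aeval fun i => monomial (A i) 1

variable {R}

theorem prod_map_X_eq_monomial (M : Multiset σ) :
    (M.map X).prod = monomial (Multiset.toFinsupp M) (1 : R) := by
  induction M using Multiset.induction with
  | empty => simp
  | cons a M ih =>
    rw [Multiset.map_cons, Multiset.prod_cons, ih, ← Multiset.singleton_add,
      Multiset.toFinsupp_add, Multiset.toFinsupp_singleton, X, monomial_mul, one_mul]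

variable (A : σ → τ →₀ ℕ)

theorem monomialMap_prod_map_X (M : Multiset σ) :
    monomialMap R A (M.map X).prod = monomial (M.map A).sum 1 := by
  induction M using Multiset.induction with
  | empty => simp
  | cons a M ih =>
    simp only [Multiset.map_cons, Multiset.prod_cons, Multiset.sum_cons, map_mul, ih, aeval_X,
      monomial_mul, one_mul]

theorem monomialMap_eq_mapDomain :
    (monomialMap R A).toLinearMap = AddMonoidAlgebra.mapDomainLinearMap R R
      (fun u => ((Finsupp.toMultiset u).map A).sum) := by
  ext u : 2
  have := monomialMap_prod_map_X (R := R) A (Finsupp.toMultiset u)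
  rw [prod_map_X_eq_monomial, Finsupp.toMultiset_toFinsupp] at this
  simpa [← single_eq_monomial] using this

/-- The kernel of a monomial map is spanned by the binomials of its fibres: subtracting from `p`
its image under a retraction of the exponents onto fibre representatives leaves a combination
of binomials, and that image is zero since it factors through `monomialMap R A p = 0`. -/
theorem ker_monomialMap_le {I : Ideal (MvPolynomial σ R)}
    (hI : ∀ M N : Multiset σ, (M.map A).sum = (N.map A).sum →
      (M.map X).prod - (N.map X).prod ∈ I) :
    RingHom.ker (monomialMap R A) ≤ I := by
  intro p hp
  set Λ : (σ →₀ ℕ) → τ →₀ ℕ := fun u => ((Finsupp.toMultiset u).map A).sum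
  set r : (σ →₀ ℕ) → σ →₀ ℕ := Function.invFun Λ ∘ Λ
  have hr : ∀ u, Λ (r u) = Λ u := fun u => Function.invFun_eq ⟨u, rfl⟩
  set ρ := AddMonoidAlgebra.mapDomainLinearMap R R r
  have hρp : ρ p = 0 := by
    change AddMonoidAlgebra.mapDomainLinearMap R R (Function.invFun Λ ∘ Λ) p = 0
    rw [AddMonoidAlgebra.mapDomainLinearMap_comp, LinearMap.comp_apply,
      ← monomialMap_eq_mapDomain, AlgHom.toLinearMap_apply, RingHom.mem_ker.mp hp, map_zero]
  have hρ : ∀ u c, ρ (monomial u c) = monomial (r u) c := fun u c =>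
    AddMonoidAlgebra.mapDomainLinearMap_single _ _ _
  have hbinom : ∀ u, monomial u (1 : R) - monomial (r u) 1 ∈ I := by
    intro u
    have := hI (Finsupp.toMultiset u) (Finsupp.toMultiset (r u)) (hr u).symm
    rwa [prod_map_X_eq_monomial, prod_map_X_eq_monomial, Finsupp.toMultiset_toFinsupp,
      Finsupp.toMultiset_toFinsupp] at this
  have hp_eq : p = ∑ u ∈ p.support, C (coeff u p) * (monomial u 1 - monomial (r u) 1) :=
    calc p = p - ρ p := by rw [hρp, sub_zero]
    _ = ∑ u ∈ p.support, C (coeff u p) * (monomial u 1 - monomial (r u) 1) := by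
      conv_lhs => rw [p.as_sum]
      simp only [map_sum, hρ, ← Finset.sum_sub_distrib, mul_sub, C_mul_monomial, mul_one]
  rw [hp_eq]
  exact Ideal.sum_mem _ fun u _ => Ideal.mul_mem_left _ _ (hbinom u)

end Toric

section QuadraticMove

variable {σ τ : Type*} (R : Type*) [CommRing R] (A : σ → τ →₀ ℕ)

def QuadraticMove (M N : Multiset σ) : Prop :=
  ∃ a b c d M₀, M = a ::ₘ b ::ₘ M₀ ∧ N = c ::ₘ d ::ₘ M₀ ∧ A a + A b = A c + A d

def quadrics : Set (MvPolynomial σ R) :=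
  {p | p ∈ RingHom.ker (monomialMap R A) ∧ p.IsHomogeneous 2}

variable {A}

theorem QuadraticMove.sum_map_eq {M N : Multiset σ} (h : QuadraticMove A M N) :
    (M.map A).sum = (N.map A).sum := by
  obtain ⟨a, b, c, d, M₀, rfl, rfl, hA⟩ := h
  simp only [Multiset.map_cons, Multiset.sum_cons, ← add_assoc, hA]

theorem QuadraticMove.cons {M N : Multiset σ} (h : QuadraticMove A M N) (x : σ) :
    QuadraticMove A (x ::ₘ M) (x ::ₘ N) := by
  obtain ⟨a, b, c, d, M₀, rfl, rfl, hA⟩ := h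
  exact ⟨a, b, c, d, x ::ₘ M₀, by simp only [Multiset.cons_swap x],
    by simp only [Multiset.cons_swap x], hA⟩

theorem sum_map_eq_of_reflTransGen {M N : Multiset σ}
    (h : Relation.ReflTransGen (QuadraticMove A) M N) : (M.map A).sum = (N.map A).sum := by
  induction h with
  | refl => rfl
  | tail _ hmove ih => exact ih.trans hmove.sum_map_eq

theorem reflTransGen_cons {M N : Multiset σ}
    (h : Relation.ReflTransGen (QuadraticMove A) M N) (x : σ) :
    Relation.ReflTransGen (QuadraticMove A) (x ::ₘ M) (x ::ₘ N) :=
  h.lift (x ::ₘ ·) fun _ _ hmove => hmove.cons x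

theorem X_mul_X_sub_X_mul_X_mem_quadrics {a b c d : σ} (h : A a + A b = A c + A d) :
    (X a * X b - X c * X d : MvPolynomial σ R) ∈ quadrics R A := by
  refine ⟨?_, ((isHomogeneous_X R a).mul (isHomogeneous_X R b)).sub
    ((isHomogeneous_X R c).mul (isHomogeneous_X R d))⟩
  rw [RingHom.mem_ker, map_sub, map_mul, map_mul, aeval_X, aeval_X, aeval_X, aeval_X,
    monomial_mul, monomial_mul, h, sub_self]

theorem QuadraticMove.prod_sub_prod_mem_span {M N : Multiset σ} (h : QuadraticMove A M N) :
    (M.map X).prod - (N.map X).prod ∈ Ideal.span (quadrics R A) := by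
  obtain ⟨a, b, c, d, M₀, rfl, rfl, hA⟩ := h
  have hfactor : ((a ::ₘ b ::ₘ M₀).map X).prod - ((c ::ₘ d ::ₘ M₀).map X).prod
      = (M₀.map X).prod * (X a * X b - X c * X d : MvPolynomial σ R) := by
    simp only [Multiset.map_cons, Multiset.prod_cons]
    ring
  rw [hfactor]
  exact Ideal.mul_mem_left _ _ (Ideal.subset_span (X_mul_X_sub_X_mul_X_mem_quadrics R hA))

theorem prod_sub_prod_mem_span_of_reflTransGen {M N : Multiset σ}
    (h : Relation.ReflTransGen (QuadraticMove A) M N) :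
    (M.map X).prod - (N.map X).prod ∈ Ideal.span (quadrics R A) := by
  induction h with
  | refl => simp
  | tail _ hmove ih =>
    simpa using Ideal.add_mem _ ih (hmove.prod_sub_prod_mem_span R)

theorem ker_monomialMap_eq_span_quadrics
    (hconn : ∀ M N : Multiset σ, (M.map A).sum = (N.map A).sum →
      Relation.ReflTransGen (QuadraticMove A) M N) :
    RingHom.ker (monomialMap R A) = Ideal.span (quadrics R A) :=
  le_antisymm
    (ker_monomialMap_le A fun M N h => prod_sub_prod_mem_span_of_reflTransGen R (hconn M N h))
    (Ideal.span_le.mpr fun _ hp => hp.1)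

end QuadraticMove

end MvPolynomial

theorem ZMod.two_multiset_eq_of_map_fst_snd_add {P Q : Multiset (ZMod 2 × ZMod 2)}
    (h₁ : P.map Prod.fst = Q.map Prod.fst) (h₂ : P.map Prod.snd = Q.map Prod.snd)
    (h₃ : P.map (fun x => x.1 + x.2) = Q.map (fun x => x.1 + x.2)) : P = Q := by
  have key : ∀ (P : Multiset (ZMod 2 × ZMod 2)) (a b : ZMod 2),
      2 * P.count (a, b) + Multiset.card P = (P.map Prod.fst).count a +
        (P.map Prod.snd).count b + (P.map fun x => x.1 + x.2).count (a + b) := by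
    intro P a b
    have hx : ∀ y z : ZMod 2, 2 * (if (a, b) = (y, z) then 1 else 0) + 1 =
        (if a = y then 1 else 0) + (if b = z then 1 else 0) + (if a + b = y + z then 1 else 0) := by
      revert a b
      decide
    induction P using Multiset.induction with
    | empty => simp
    | cons x P ih =>
      obtain ⟨y, z⟩ := x
      have := hx y z
      simp only [Multiset.count_cons, Multiset.map_cons, Multiset.card_cons]
      omega
  have hcard : Multiset.card P = Multiset.card Q := by
    rw [← Multiset.card_map Prod.fst P, h₁, Multiset.card_map]
  ext ⟨a, b⟩
  have hP := key P a b
  rw [h₁, h₂, h₃, hcard, ← key Q a b] at hP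
  omega

namespace PhyloTree

variable {T : PhyloTree}

theorem iterate_parent_root (n : ℕ) : T.parent^[n] T.root = T.root :=
  Function.iterate_fixed T.parent_root n

theorem eq_root_of_iterate_parent_eq_self {v : T.V} {k : ℕ} (h : T.parent^[k + 1] v = v) :
    v = T.root := by
  obtain ⟨n, hn⟩ := T.reaches_root v
  calc v = T.parent^[(k + 1) * n] v := (Function.IsPeriodicPt.mul_const (f := T.parent) h n).symm
    _ = T.root := by rw [Nat.succ_mul, Function.iterate_add_apply, hn, iterate_parent_root]

/-- The descendant order: `u ≤ v` when `u` lies below `v`. -/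
instance : PartialOrder T.V where
  le := T.Desc
  le_refl _ := ⟨0, rfl⟩
  le_trans _ _ _ := fun ⟨a, ha⟩ ⟨b, hb⟩ => ⟨b + a, by rw [Function.iterate_add_apply, ha, hb]⟩
  le_antisymm u v := fun ⟨a, ha⟩ ⟨b, hb⟩ => by
    cases a with
    | zero => exact ha
    | succ a =>
      have hu : u = T.root := eq_root_of_iterate_parent_eq_self (k := b + a) <| by
        rw [add_assoc, Function.iterate_add_apply, ha, hb]
      rw [← ha, hu, iterate_parent_root]

theorem le_root (v : T.V) : v ≤ T.root := T.reaches_root v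

theorem le_parent (v : T.V) : v ≤ T.parent v := ⟨1, rfl⟩

theorem le_total_of_le {l u v : T.V} (hu : l ≤ u) (hv : l ≤ v) : u ≤ v ∨ v ≤ u := by
  obtain ⟨a, ha⟩ := hu
  obtain ⟨b, hb⟩ := hv
  rcases le_total a b with hab | hab
  · exact .inl ⟨b - a, by rw [← ha, ← Function.iterate_add_apply, Nat.sub_add_cancel hab, hb]⟩
  · exact .inr ⟨a - b, by rw [← hb, ← Function.iterate_add_apply, Nat.sub_add_cancel hab, ha]⟩

theorem parent_le_of_lt {u v : T.V} (h : u < v) : T.parent u ≤ v := by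
  obtain ⟨⟨n, hn⟩, hne⟩ := lt_iff_le_and_ne.mp h
  cases n with
  | zero => exact absurd hn hne
  | succ n => exact ⟨n, hn⟩

theorem eq_of_le_of_isLeaf {u v : T.V} (hv : T.IsLeaf v) (h : u ≤ v) : u = v := by
  obtain ⟨n, hn⟩ := h
  induction n generalizing u with
  | zero => exact hn
  | succ n ih => exact hv u (ih hn)

variable (T) in
noncomputable def children (v : T.V) : Finset T.V :=
  Finset.univ.filter fun u => T.parent u = v ∧ u ≠ v

theorem mem_children {c v : T.V} : c ∈ T.children v ↔ T.parent c = v ∧ c ≠ v := by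
  simp [children]

theorem lt_of_mem_children {c v : T.V} (hc : c ∈ T.children v) : c < v := by
  obtain ⟨hcv, hne⟩ := mem_children.mp hc
  exact lt_of_le_of_ne (hcv ▸ le_parent c) hne

theorem not_isLeaf_of_mem_children {c v : T.V} (hc : c ∈ T.children v) : ¬ T.IsLeaf v :=
  fun hv => (mem_children.mp hc).2 (hv c (mem_children.mp hc).1)

theorem exists_mem_children_of_lt {u v : T.V} (h : u < v) : ∃ c ∈ T.children v, u ≤ c := by
  suffices ∀ n u, T.parent^[n] u = v → u ≠ v → ∃ c ∈ T.children v, u ≤ c by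
    obtain ⟨n, hn⟩ := h.le
    exact this n u hn h.ne
  intro n
  induction n with
  | zero => exact fun u hu hne => absurd hu hne
  | succ n ih =>
    intro u hu hne
    by_cases hpv : T.parent u = v
    · exact ⟨u, mem_children.mpr ⟨hpv, hne⟩, le_rfl⟩
    · obtain ⟨c, hc, hpc⟩ := ih (T.parent u) hu hpv
      exact ⟨c, hc, (le_parent u).trans hpc⟩

theorem not_le_of_mem_children {v c₁ c₂ : T.V} (h₁ : c₁ ∈ T.children v) (h₂ : c₂ ∈ T.children v)
    (hne : c₁ ≠ c₂) : ¬ c₁ ≤ c₂ := fun hle =>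
  (lt_of_mem_children h₂).not_ge <|
    (mem_children.mp h₁).1 ▸ parent_le_of_lt (lt_of_le_of_ne hle hne)

theorem le_iff_exists_mem_children {v : T.V} (hv : ¬ T.IsLeaf v) (l : T.Leaf) :
    l.1 ≤ v ↔ ∃ c ∈ T.children v, l.1 ≤ c := by
  refine ⟨fun hl => exists_mem_children_of_lt (lt_of_le_of_ne hl ?_), fun ⟨c, hc, hlc⟩ =>
    hlc.trans (lt_of_mem_children hc).le⟩
  rintro rfl
  exact hv l.2

theorem mem_leavesBelow {l : T.Leaf} {v : T.V} : l ∈ T.leavesBelow v ↔ l.1 ≤ v := by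
  simp only [leavesBelow, Finset.mem_filter, Finset.mem_univ, true_and]
  rfl

theorem leavesBelow_eq_biUnion_children {v : T.V} (hv : ¬ T.IsLeaf v) :
    T.leavesBelow v = (T.children v).biUnion T.leavesBelow := by
  ext l
  simp only [Finset.mem_biUnion, mem_leavesBelow, le_iff_exists_mem_children hv]

theorem pairwiseDisjoint_leavesBelow_children (v : T.V) :
    (T.children v : Set T.V).PairwiseDisjoint T.leavesBelow := by
  intro c₁ h₁ c₂ h₂ hne
  refine Finset.disjoint_left.mpr fun l hl₁ hl₂ => ?_
  rcases le_total_of_le (mem_leavesBelow.mp hl₁) (mem_leavesBelow.mp hl₂) with h | h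
  · exact not_le_of_mem_children h₁ h₂ hne h
  · exact not_le_of_mem_children h₂ h₁ hne.symm h

section Patch

variable {α : Type*}

variable (T) in
noncomputable def patch (v : T.V) (a b : T.Leaf → α) : T.Leaf → α :=
  fun l => if l.1 ≤ v then b l else a l

theorem patch_self (v : T.V) (a : T.Leaf → α) : T.patch v a a = a :=
  funext fun _ => ite_self _

theorem patch_root (a b : T.Leaf → α) : T.patch T.root a b = b :=
  funext fun l => if_pos (le_root l.1)

theorem patch_patch_same (v : T.V) (a b c : T.Leaf → α) :
    T.patch v (T.patch v a b) c = T.patch v a c := by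
  funext l
  by_cases h : l.1 ≤ v <;> simp [patch, h]

theorem patch_patch_children {v c₁ c₂ : T.V} (hc : T.children v = {c₁, c₂})
    (a b : T.Leaf → α) : T.patch c₂ (T.patch c₁ a b) b = T.patch v a b := by
  have hv : ¬ T.IsLeaf v := not_isLeaf_of_mem_children (hc ▸ Finset.mem_insert_self c₁ {c₂})
  funext l
  have hl : l.1 ≤ v ↔ l.1 ≤ c₁ ∨ l.1 ≤ c₂ := by simp [le_iff_exists_mem_children hv, hc]
  by_cases h₁ : l.1 ≤ c₁ <;> by_cases h₂ : l.1 ≤ c₂ <;> simp [patch, h₁, h₂, hl]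

end Patch

section Gsum

variable {G 𝓛 : Type} [AddCommGroup G]

theorem gsum_leaf (g : T.Leaf → G) (l : T.Leaf) : T.gsum g l.1 = g l := by
  have : T.leavesBelow l.1 = {l} := by
    ext l'
    rw [mem_leavesBelow, Finset.mem_singleton]
    exact ⟨fun h => Subtype.ext (eq_of_le_of_isLeaf l.2 h), fun h => h ▸ le_rfl⟩
  rw [gsum, this, Finset.sum_singleton]

theorem gsum_eq_sum_children (g : T.Leaf → G) {v : T.V} (hv : ¬ T.IsLeaf v) :
    T.gsum g v = ∑ c ∈ T.children v, T.gsum g c := by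
  rw [gsum, leavesBelow_eq_biUnion_children hv,
    Finset.sum_biUnion (pairwiseDisjoint_leavesBelow_children v)]
  rfl

theorem gsum_eq_add_of_children_eq (g : T.Leaf → G) {v c₁ c₂ : T.V}
    (hc : T.children v = {c₁, c₂}) (hne : c₁ ≠ c₂) :
    T.gsum g v = T.gsum g c₁ + T.gsum g c₂ := by
  have hv : ¬ T.IsLeaf v := not_isLeaf_of_mem_children (hc ▸ Finset.mem_insert_self c₁ {c₂})
  rw [gsum_eq_sum_children g hv, hc, Finset.sum_pair hne]

theorem patch_eq_self_of_isLeaf {v : T.V} (hv : T.IsLeaf v) {a b : T.Leaf → G}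
    (hab : T.gsum a v = T.gsum b v) : T.patch v a b = a := by
  funext l
  by_cases h : l.1 ≤ v
  · obtain rfl := eq_of_le_of_isLeaf hv h
    rw [patch, if_pos h, ← gsum_leaf b l, ← gsum_leaf a l, hab]
  · exact if_neg h

theorem gsum_patch_of_le {v e : T.V} (a b : T.Leaf → G) (h : e ≤ v) :
    T.gsum (T.patch v a b) e = T.gsum b e :=
  Finset.sum_congr rfl fun _ hl => if_pos ((mem_leavesBelow.mp hl).trans h)

/-- The patched leaves below `e` are either all the leaves below `v` (if `v ≤ e`) or none. -/
theorem gsum_patch_of_not_le {v e : T.V} {a b : T.Leaf → G} (hab : T.gsum a v = T.gsum b v)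
    (h : ¬ e ≤ v) : T.gsum (T.patch v a b) e = T.gsum a e := by
  have hfilter : (T.leavesBelow e).filter (fun l => l.1 ≤ v) =
      if v ≤ e then T.leavesBelow v else ∅ := by
    ext l
    split_ifs with hve <;> simp only [Finset.mem_filter, mem_leavesBelow]
    · exact ⟨And.right, fun hl => ⟨hl.trans hve, hl⟩⟩
    · simp only [Finset.notMem_empty, iff_false, not_and]
      exact fun hle hlv => (le_total_of_le hle hlv).elim h hve
  have hpatched : ∑ l ∈ (T.leavesBelow e).filter (fun l => l.1 ≤ v), b l =
      ∑ l ∈ (T.leavesBelow e).filter (fun l => l.1 ≤ v), a l := by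
    rw [hfilter]
    split_ifs
    · exact hab.symm
    · rfl
  unfold gsum
  rw [← Finset.sum_filter_add_sum_filter_not _ (fun l => l.1 ≤ v),
    ← Finset.sum_filter_add_sum_filter_not (T.leavesBelow e) (fun l => l.1 ≤ v) a]
  congr 1
  · rw [← hpatched]
    exact Finset.sum_congr rfl fun l hl => if_pos (Finset.mem_filter.mp hl).2
  · exact Finset.sum_congr rfl fun l hl => if_neg (Finset.mem_filter.mp hl).2

variable (T) in
/-- The exponent of the image `∏_e a^{(e)}_{L(g(e))}` of `q_g`. -/
noncomputable def edgeExponent (L : G → 𝓛) (g : T.Leaf → G) : T.V × 𝓛 →₀ ℕ :=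
  ∑ e, Finsupp.single (e, L (T.gsum g e)) 1

theorem Phi_eq_monomialMap (L : G → 𝓛) : T.Phi L = monomialMap ℂ (T.edgeExponent L) := by
  unfold Phi edgeExponent
  congr 1
  funext g
  rw [monomial_sum_one]
  rfl

theorem idealTL_eq_ker_monomialMap (L : G → 𝓛) :
    T.idealTL L = RingHom.ker (monomialMap ℂ (T.edgeExponent L)) := by
  rw [idealTL, Phi_eq_monomialMap]

theorem edgeExponent_apply (L : G → 𝓛) (g : T.Leaf → G) (e : T.V) (b : 𝓛) :
    T.edgeExponent L g (e, b) = if b = L (T.gsum g e) then 1 else 0 := by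
  rw [edgeExponent, Finsupp.finsetSum_apply, Finset.sum_eq_single e]
  · simp [Finsupp.single_apply, eq_comm]
  · intro e' _ he'
    simp [he']
  · simp

theorem sum_map_edgeExponent_apply (L : G → 𝓛) (M : Multiset (T.Leaf → G)) (e : T.V) (b : 𝓛) :
    (M.map (T.edgeExponent L)).sum (e, b) = (M.map fun g => L (T.gsum g e)).count b := by
  induction M using Multiset.induction with
  | empty => simp
  | cons g M ih =>
    rw [Multiset.map_cons, Multiset.sum_cons, Finsupp.add_apply, ih, edgeExponent_apply,
      Multiset.map_cons, Multiset.count_cons, add_comm]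

theorem map_eq_of_sum_map_edgeExponent_eq {L : G → 𝓛} {M N : Multiset (T.Leaf → G)}
    (h : (M.map (T.edgeExponent L)).sum = (N.map (T.edgeExponent L)).sum) (e : T.V) :
    M.map (fun g => L (T.gsum g e)) = N.map (fun g => L (T.gsum g e)) := by
  ext b
  rw [← sum_map_edgeExponent_apply, ← sum_map_edgeExponent_apply, h]

theorem edgeExponent_add_edgeExponent_eq_patch (L : G → 𝓛) {v : T.V} {a b : T.Leaf → G}
    (hab : T.gsum a v = T.gsum b v) :
    T.edgeExponent L a + T.edgeExponent L b =
      T.edgeExponent L (T.patch v a b) + T.edgeExponent L (T.patch v b a) := by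
  simp only [edgeExponent, ← Finset.sum_add_distrib]
  refine Finset.sum_congr rfl fun e _ => ?_
  by_cases h : e ≤ v
  · rw [gsum_patch_of_le a b h, gsum_patch_of_le b a h, add_comm]
  · rw [gsum_patch_of_not_le hab h, gsum_patch_of_not_le hab.symm h]

end Gsum

theorem IsBinary.exists_children_eq_pair (hT : T.IsBinary) {v : T.V} (hv : ¬ T.IsLeaf v) :
    ∃ c₁ c₂, c₁ ≠ c₂ ∧ T.children v = {c₁, c₂} :=
  Finset.card_eq_two.mp (hT v hv)

section JukesCantor

variable {v c₁ c₂ : T.V} {g t : T.Leaf → ZMod 2} {M N : Multiset (T.Leaf → ZMod 2)}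

theorem exists_mem_gsum_children_eq (hc : T.children v = {c₁, c₂}) (hne : c₁ ≠ c₂)
    (hMN : (M.map (T.edgeExponent id)).sum = (N.map (T.edgeExponent id)).sum) (ht : t ∈ N) :
    ∃ x ∈ M, T.gsum x c₁ = T.gsum t c₁ ∧ T.gsum x c₂ = T.gsum t c₂ := by
  have hpairs : M.map (fun x => (T.gsum x c₁, T.gsum x c₂)) =
      N.map (fun x => (T.gsum x c₁, T.gsum x c₂)) := by
    have hmap := map_eq_of_sum_map_edgeExponent_eq hMN
    have hsplit := fun x : T.Leaf → ZMod 2 => gsum_eq_add_of_children_eq x hc hne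
    refine ZMod.two_multiset_eq_of_map_fst_snd_add ?_ ?_ ?_
    · simpa [Multiset.map_map, Function.comp_def] using hmap c₁
    · simpa [Multiset.map_map, Function.comp_def] using hmap c₂
    · simpa [Multiset.map_map, Function.comp_def, hsplit] using hmap v
  have : (T.gsum t c₁, T.gsum t c₂) ∈ M.map (fun x => (T.gsum x c₁, T.gsum x c₂)) :=
    hpairs ▸ Multiset.mem_map_of_mem _ ht
  simpa using this

theorem exists_reflTransGen_patch_children (hc : T.children v = {c₁, c₂}) (hne : c₁ ≠ c₂)
    (hMN : ((g ::ₘ M).map (T.edgeExponent id)).sum = (N.map (T.edgeExponent id)).sum)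
    (ht : t ∈ N) (hg : T.gsum g v = T.gsum t v) :
    ∃ x M₁, Relation.ReflTransGen (QuadraticMove (T.edgeExponent id)) (g ::ₘ M)
        (T.patch v g x ::ₘ M₁) ∧ T.gsum x c₁ = T.gsum t c₁ ∧ T.gsum x c₂ = T.gsum t c₂ := by
  obtain ⟨x, hx, hx₁, hx₂⟩ := exists_mem_gsum_children_eq hc hne hMN ht
  rcases Multiset.mem_cons.mp hx with rfl | hxM
  · exact ⟨x, M, by rw [patch_self], hx₁, hx₂⟩
  have hgx : T.gsum g v = T.gsum x v := by
    rw [hg, gsum_eq_add_of_children_eq t hc hne, gsum_eq_add_of_children_eq x hc hne, hx₁, hx₂]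
  refine ⟨x, T.patch v x g ::ₘ M.erase x, .single ?_, hx₁, hx₂⟩
  exact ⟨g, x, _, _, M.erase x, by rw [Multiset.cons_erase hxM], rfl,
    edgeExponent_add_edgeExponent_eq_patch id hgx⟩

/-- Swap the subtrees at `v` of `g` and of an element with `t`'s values at both children of `v`,
then recurse into the two children. -/
theorem exists_reflTransGen_patch (hT : T.IsBinary) (ht : t ∈ N) (v : T.V) :
    ∀ {g M}, ((g ::ₘ M).map (T.edgeExponent id)).sum = (N.map (T.edgeExponent id)).sum →
      T.gsum g v = T.gsum t v → ∃ M₁, Relation.ReflTransGen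
        (QuadraticMove (T.edgeExponent id)) (g ::ₘ M) (T.patch v g t ::ₘ M₁) := by
  induction v using WellFoundedLT.induction with
  | _ v ih =>
  intro g M hMN hg
  by_cases hv : T.IsLeaf v
  · exact ⟨M, by rw [patch_eq_self_of_isLeaf hv hg]⟩
  obtain ⟨c₁, c₂, hne, hc⟩ := hT.exists_children_eq_pair hv
  have hc₁ : c₁ ∈ T.children v := hc ▸ Finset.mem_insert_self c₁ {c₂}
  have hc₂ : c₂ ∈ T.children v := hc ▸ Finset.mem_insert_of_mem (Finset.mem_singleton_self c₂)
  obtain ⟨x, M₁, h₁, hx₁, hx₂⟩ := exists_reflTransGen_patch_children hc hne hMN ht hg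
  have hg₁ : T.gsum (T.patch v g x) c₁ = T.gsum t c₁ := by
    rw [gsum_patch_of_le _ _ (lt_of_mem_children hc₁).le, hx₁]
  obtain ⟨M₂, h₂⟩ := ih c₁ (lt_of_mem_children hc₁)
    ((sum_map_eq_of_reflTransGen h₁).symm.trans hMN) hg₁
  obtain ⟨M₃, h₃⟩ := ih c₂ (lt_of_mem_children hc₂)
    ((sum_map_eq_of_reflTransGen (h₁.trans h₂)).symm.trans hMN) (by
      rw [gsum_patch_of_not_le hg₁ (not_le_of_mem_children hc₂ hc₁ hne.symm),
        gsum_patch_of_le _ _ (lt_of_mem_children hc₂).le, hx₂])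
  rw [patch_patch_children hc, patch_patch_same] at h₃
  exact ⟨M₃, h₁.trans (h₂.trans h₃)⟩

theorem reflTransGen_of_sum_map_edgeExponent_eq (hT : T.IsBinary) :
    (M.map (T.edgeExponent id)).sum = (N.map (T.edgeExponent id)).sum →
      Relation.ReflTransGen (QuadraticMove (T.edgeExponent id)) M N := by
  induction N using Multiset.induction generalizing M with
  | empty =>
    intro h
    have hM := map_eq_of_sum_map_edgeExponent_eq h T.root
    rw [Multiset.map_zero, Multiset.map_eq_zero] at hM
    rw [hM]
  | cons t N ih =>
    intro h
    obtain ⟨g, hg, hgt⟩ : ∃ g ∈ M, T.gsum g T.root = T.gsum t T.root := by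
      have hroot : T.gsum t T.root ∈ M.map (fun g => id (T.gsum g T.root)) := by
        rw [map_eq_of_sum_map_edgeExponent_eq h T.root]
        exact Multiset.mem_map_of_mem _ (Multiset.mem_cons_self t N)
      simpa using hroot
    rw [← Multiset.cons_erase hg] at h ⊢
    obtain ⟨M₁, h₁⟩ := exists_reflTransGen_patch hT (Multiset.mem_cons_self t N) T.root h hgt
    rw [patch_root] at h₁
    have hM₁ : (M₁.map (T.edgeExponent id)).sum = (N.map (T.edgeExponent id)).sum := by
      simpa using (sum_map_eq_of_reflTransGen h₁).symm.trans h
    exact h₁.trans (reflTransGen_cons (ih hM₁) t)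

end JukesCantor

end PhyloTree

/-- **Theorem (Jukes–Cantor binary model).** For `G = ℤ/2ℤ` with the identity labeling,
the ideal `I_{T,L}` of any binary rooted tree `T` is generated by the homogeneous
polynomials of degree `2` that it contains. -/
theorem jukesCantorBinary_ideal_generated_in_degree_two
    (T : PhyloTree) (hT : T.IsBinary) :
    T.idealTL (id : ZMod 2 → ZMod 2) =
      Ideal.span {p : MvPolynomial (T.Leaf → ZMod 2) ℂ |
        p ∈ T.idealTL (id : ZMod 2 → ZMod 2) ∧ p.IsHomogeneous 2} := by
  rw [PhyloTree.idealTL_eq_ker_monomialMap]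
  exact ker_monomialMap_eq_span_quadrics ℂ fun _ _ =>
    PhyloTree.reflTransGen_of_sum_map_edgeExponent_eq hT
end

section
/- The ℂ-vector space of linear forms contained in the ideal I_{T,L} is spanned by the differences q_g − q_h, where g = (g_1,…,g_m) and h = (h_1,…,h_m) range over pairs of elements of G^m satisfying L(g(e)) = L(h(e)) for every edge e of T. -/
open MvPolynomial

attribute [local instance] Classical.propDecidable

/-! A linear form `∑ c_g q_g` is sent to `∑ c_g b (f g)`, where `f g` records the edge labels
`e ↦ L (g(e))` and `b` sends a labelling to its monomial `∏ e, a^{(e)}_{c e}`. Distinct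
labellings give distinct monomials, which are linearly independent, so the form is an invariant
iff its coefficients sum to zero on every fibre of `f`, i.e. iff it lies in the kernel of
`Finsupp.mapDomain f`, which is spanned by differences of basis vectors in a common fibre. -/

namespace Finsupp

variable {R σ τ M : Type*} [Ring R] [AddCommGroup M] [Module R M]

theorem ker_lmapDomain (f : σ → τ) :
    LinearMap.ker (lmapDomain R R f) =
      Submodule.span R {v | ∃ s t, f s = f t ∧ v = single s 1 - single t 1} := by
  refine le_antisymm (fun v hv => ?_) (Submodule.span_le.mpr ?_)
  · rcases isEmpty_or_nonempty σ with _ | _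
    · simp [Subsingleton.elim v 0]
    -- `rep` picks one point in each fibre of `f`; `v - mapDomain rep v` is a sum of
    -- differences, and `mapDomain rep v` factors through `mapDomain f v = 0`.
    set rep : σ → σ := Function.invFun f ∘ f
    have hrep : ∀ s, f (rep s) = f s := fun s => Function.invFun_eq ⟨s, rfl⟩
    have hdiff : ∀ w : σ →₀ R, w - mapDomain rep w ∈
        Submodule.span R {v | ∃ s t, f s = f t ∧ v = single s 1 - single t 1} := by
      intro w
      induction w using Finsupp.induction_linear with
      | zero => simp
      | add w₁ w₂ h₁ h₂ =>
        rw [mapDomain_add, add_sub_add_comm]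
        exact add_mem h₁ h₂
      | single s r =>
        rw [mapDomain_single, ← smul_single_one s r, ← smul_single_one (rep s) r, ← smul_sub]
        exact Submodule.smul_mem _ _ (Submodule.subset_span ⟨s, rep s, (hrep s).symm, rfl⟩)
    have hrep_v : mapDomain rep v = 0 := by
      rw [mapDomain_comp]
      exact congrArg (mapDomain _) hv
    simpa [hrep_v] using hdiff v
  · rintro _ ⟨s, t, hst, rfl⟩
    simp [mapDomain_sub, hst]

theorem _root_.LinearIndependent.ker_linearCombination_comp {b : τ → M}
    (hb : LinearIndependent R b) (f : σ → τ) :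
    LinearMap.ker (linearCombination R (b ∘ f)) =
      Submodule.span R {v | ∃ s t, f s = f t ∧ v = single s 1 - single t 1} := by
  rw [linearCombination_comp, LinearMap.ker_comp_of_ker_eq_bot _ (linearIndependent_iff_ker.mp hb),
    ker_lmapDomain]

end Finsupp

namespace MvPolynomial

variable {R σ τ A : Type*} [CommRing R] [CommRing A] [Algebra R A]

theorem aeval_linearCombination_X (x : σ → A) (v : σ →₀ R) :
    aeval (R := R) x (Finsupp.linearCombination R X v) = Finsupp.linearCombination R x v := by
  simp [Finsupp.linearCombination_apply, Finsupp.sum, Algebra.smul_def]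

theorem homogeneousSubmodule_one_inf_ker_aeval_comp {b : τ → A}
    (hb : LinearIndependent R b) (f : σ → τ) :
    homogeneousSubmodule σ R 1 ⊓ (RingHom.ker (aeval (R := R) (b ∘ f))).restrictScalars R =
      Submodule.span R {p | ∃ s t, f s = f t ∧ p = X s - X t} := by
  have hker : Submodule.comap (Finsupp.linearCombination R X)
      ((RingHom.ker (aeval (R := R) (b ∘ f))).restrictScalars R) =
        LinearMap.ker (Finsupp.linearCombination R (b ∘ f)) := by
    ext v
    simp [aeval_linearCombination_X]
  rw [homogeneousSubmodule_one_eq_span_X, ← Finsupp.range_linearCombination,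
    ← Submodule.map_comap_eq, hker, hb.ker_linearCombination_comp, Submodule.map_span]
  congr 1
  ext p
  simp [eq_comm]

variable (R) in
theorem linearIndependent_prod_X_mk {ι κ : Type*} [Fintype ι] :
    LinearIndependent R fun c : ι → κ => ∏ i, (X (i, c i) : MvPolynomial (ι × κ) R) := by
  have hexp : Function.Injective fun c : ι → κ => ∑ i, Finsupp.single (i, c i) 1 := by
    intro c c' h
    funext i
    simpa [Finsupp.finsetSum_apply, Finsupp.single_apply, ite_and] using
      DFunLike.congr_fun h (i, c' i)
  have hmono : (fun c : ι → κ => ∏ i, (X (i, c i) : MvPolynomial (ι × κ) R)) =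
      basisMonomials (ι × κ) R ∘ fun c => ∑ i, Finsupp.single (i, c i) 1 := by
    funext c
    simp [X, monomial_sum_one]
  rw [hmono]
  exact (basisMonomials (ι × κ) R).linearIndependent.comp _ hexp

end MvPolynomial

/-- **Proposition (linear invariants).** The vector space of linear forms contained in the
ideal `I_{T,L}` is spanned by the differences `q_g − q_h` where `L(g(e)) = L(h(e))` for
all edges `e` of `T`. -/
theorem linear_invariants_spanned_by_differences
    (T : PhyloTree) {G 𝓛 : Type} [AddCommGroup G] [Fintype G] (L : G → 𝓛) :
    (homogeneousSubmodule (T.Leaf → G) ℂ 1) ⊓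
        Submodule.restrictScalars ℂ (T.idealTL L) =
      Submodule.span ℂ {p : MvPolynomial (T.Leaf → G) ℂ |
        ∃ g h : T.Leaf → G,
          (∀ e : T.V, L (T.gsum g e) = L (T.gsum h e)) ∧ p = X g - X h} := by
  have key := homogeneousSubmodule_one_inf_ker_aeval_comp
    (linearIndependent_prod_X_mk ℂ) fun g e => L (T.gsum g e)
  simp only [funext_iff] at key
  exact key
end

section
/- Every labeling function L : G → 𝓛 on a finite abelian group G that is 3-friendly is friendly, i.e., if L is 3-friendly then L is m-friendly for every m ≥ 3. -/
/-- The set `Z_m ⊆ G^m` of tuples with `g_1 + ⋯ + g_{m-1} = g_m`. -/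
def ZSet (G : Type) [AddCommGroup G] (m : ℕ) : Set (Fin m → G) :=
  {g | (∑ i ∈ Finset.univ.filter fun i : Fin m => (i : ℕ) < m - 1, g i) =
       ∑ i ∈ Finset.univ.filter fun i : Fin m => ¬ (i : ℕ) < m - 1, g i}

/-- A labeling function `L : G → 𝓛` is `m`-friendly if for every tuple `g ∈ Z_m` realizing
a label vector `l = L̃(g)` and every coordinate `i`, every `h ∈ L⁻¹(l_i)` occurs as the
`i`-th coordinate of some tuple in `Z_m` realizing `l`; that is, the `i`-th coordinate
projection of `L̃⁻¹(l)` equals `L⁻¹(l_i)`. -/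
def IsMFriendly {G 𝓛 : Type} [AddCommGroup G] (L : G → 𝓛) (m : ℕ) : Prop :=
  ∀ g ∈ ZSet G m, ∀ i : Fin m, ∀ h : G, L h = L (g i) →
    ∃ g' ∈ ZSet G m, (∀ j, L (g' j) = L (g j)) ∧ g' i = h

/-- A labeling function is friendly if it is `m`-friendly for all `m ≥ 3`. -/
def Friendly {G 𝓛 : Type} [AddCommGroup G] (L : G → 𝓛) : Prop :=
  ∀ m, 3 ≤ m → IsMFriendly L m

lemma zset3 {G : Type} [AddCommGroup G] (t : Fin 3 → G) :
    t ∈ ZSet G 3 ↔ t 0 + t 1 = t 2 := by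
  have h1 : (Finset.univ.filter fun i : Fin 3 => (i : ℕ) < 3 - 1) = {0, 1} := by decide
  have h2 : (Finset.univ.filter fun i : Fin 3 => ¬ (i : ℕ) < 3 - 1) = {2} := by decide
  simp only [ZSet, Set.mem_setOf_eq]
  rw [h1, h2]
  simp

lemma zset_iff {G : Type} [AddCommGroup G] {m : ℕ} (hm : 3 ≤ m) (g : Fin m → G) :
    g ∈ ZSet G m ↔
      (∑ i ∈ Finset.univ.filter fun i : Fin m => (i : ℕ) < m - 1, g i) = g ⟨m - 1, by omega⟩ := by
  have h2 : (Finset.univ.filter fun i : Fin m => ¬ (i : ℕ) < m - 1) = {⟨m - 1, by omega⟩} := by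
    ext j
    simp [Fin.ext_iff]
    omega
  simp only [ZSet, Set.mem_setOf_eq]
  rw [h2]
  simp

/-- Key splitting lemma: if `L` is 3-friendly and `L h = L (∑ j ∈ s, a j)`, then `h` can be
written as a sum over `s` of elements with the same labels as the `a j`. -/
lemma split_lemma {G 𝓛 : Type} [AddCommGroup G] (L : G → 𝓛) (h3 : IsMFriendly L 3)
    {ι : Type} [DecidableEq ι] (s : Finset ι) (hs : s.Nonempty) (a : ι → G) :
    ∀ h : G, L h = L (∑ j ∈ s, a j) →
      ∃ a' : ι → G, (∑ j ∈ s, a' j) = h ∧ ∀ j ∈ s, L (a' j) = L (a j) := by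
  induction s using Finset.cons_induction with
  | empty => exact absurd hs (by simp)
  | cons j0 s hj0 ih =>
    intro h hh
    rcases s.eq_empty_or_nonempty with rfl | hs'
    · refine ⟨fun _ => h, by simp, ?_⟩
      intro j hj
      simp only [Finset.cons_empty, Finset.mem_singleton] at hj
      subst hj
      simpa using hh
    · -- triple (a j0, ∑_s a, total)
      set R : G := ∑ j ∈ s, a j with hR
      have htot : (∑ j ∈ Finset.cons j0 s hj0, a j) = a j0 + R := by
        rw [Finset.sum_cons]
      set t : Fin 3 → G := ![a j0, R, a j0 + R] with ht
      have htZ : t ∈ ZSet G 3 := by rw [zset3]; simp [ht]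
      have hhl : L h = L (t 2) := by
        rw [hh, htot]; simp [ht]
      obtain ⟨t', ht'Z, ht'L, ht'2⟩ := h3 t htZ 2 h hhl
      have hsum : t' 0 + t' 1 = h := by
        have := (zset3 t').mp ht'Z
        rwa [ht'2] at this
      have hL1 : L (t' 1) = L R := by simpa [ht] using ht'L 1
      obtain ⟨a'', ha''sum, ha''L⟩ := ih hs' (t' 1) hL1
      refine ⟨Function.update a'' j0 (t' 0), ?_, ?_⟩
      · rw [Finset.sum_cons, Function.update_self]
        have : (∑ j ∈ s, Function.update a'' j0 (t' 0) j) = ∑ j ∈ s, a'' j := by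
          apply Finset.sum_congr rfl
          intro j hj
          exact Function.update_of_ne (by rintro rfl; exact hj0 hj) _ _
        rw [this, ha''sum, hsum]
      · intro j hj
        rcases Finset.mem_cons.mp hj with rfl | hj'
        · rw [Function.update_self]
          simpa [ht] using ht'L 0
        · rw [Function.update_of_ne (by rintro rfl; exact hj0 hj') _ _]
          exact ha''L j hj'

/-- **Lemma.** A labeling function that is `3`-friendly is friendly. -/
theorem friendly_of_three_friendly {G 𝓛 : Type} [AddCommGroup G] [Fintype G]
    (L : G → 𝓛) (h3 : IsMFriendly L 3) : Friendly L := by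
  intro m hm g hg i h hh
  have hm1 : m - 1 < m := by omega
  set last : Fin m := ⟨m - 1, hm1⟩ with hlast
  set S : Finset (Fin m) := Finset.univ.filter fun j : Fin m => (j : ℕ) < m - 1 with hS
  have hgZ : (∑ j ∈ S, g j) = g last := (zset_iff hm g).mp hg
  have hlast_not : ¬ ((last : ℕ) < m - 1) := by simp [hlast]
  by_cases hi : (i : ℕ) < m - 1
  · -- i is one of the summands
    have hiS : i ∈ S := by simp [hS, hi]
    have hine : i ≠ last := by
      intro e; rw [e] at hi; exact hlast_not hi
    set s : Finset (Fin m) := S.erase i with hs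
    -- s is nonempty since m ≥ 3
    have hsne : s.Nonempty := by
      have h2 : (2 : ℕ) ≤ m - 1 := by omega
      by_cases h0 : i = ⟨0, by omega⟩
      · exact ⟨⟨1, by omega⟩, by simp [hs, hS, Fin.ext_iff, h0]; omega⟩
      · exact ⟨⟨0, by omega⟩, by
          simp [hs, hS, Fin.ext_iff]
          constructor
          · intro e; exact h0 (Fin.ext e.symm)
          · omega⟩
    set R : G := ∑ j ∈ s, g j with hR
    have hdecomp : g i + R = g last := by
      rw [hR, hs, Finset.add_sum_erase S g hiS, hgZ]
    set t : Fin 3 → G := ![g i, R, g last] with ht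
    have htZ : t ∈ ZSet G 3 := by rw [zset3]; simpa [ht] using hdecomp
    have hhl : L h = L (t 0) := by simpa [ht] using hh
    obtain ⟨t', ht'Z, ht'L, ht'0⟩ := h3 t htZ 0 h hhl
    have hsum : h + t' 1 = t' 2 := by
      have := (zset3 t').mp ht'Z
      rwa [ht'0] at this
    have hL1 : L (t' 1) = L R := by simpa [ht] using ht'L 1
    have hL2 : L (t' 2) = L (g last) := by simpa [ht] using ht'L 2
    obtain ⟨a', ha'sum, ha'L⟩ := split_lemma L h3 s hsne g (t' 1) hL1
    refine ⟨fun j => if j = i then h else if (j : ℕ) < m - 1 then a' j else t' 2, ?_, ?_, by simp⟩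
    · rw [zset_iff hm]
      have h1 : (∑ j ∈ S, if j = i then h else if (j : ℕ) < m - 1 then a' j else t' 2)
          = h + ∑ j ∈ s, a' j := by
        rw [← Finset.add_sum_erase S _ hiS, ← hs]
        simp only [if_pos rfl]
        congr 1
        apply Finset.sum_congr rfl
        intro j hj
        have hjne : j ≠ i := Finset.ne_of_mem_erase hj
        have hjlt : (j : ℕ) < m - 1 := by
          have := Finset.mem_of_mem_erase hj
          simpa [hS] using this
        simp [hjne, hjlt]
      rw [h1, ha'sum, hsum]
      have hne' : (⟨m - 1, hm1⟩ : Fin m) ≠ i := fun e => hine e.symm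
      simp [hne', hlast_not]
    · intro j
      by_cases hji : j = i
      · subst hji; simpa using hh
      · by_cases hjlt : (j : ℕ) < m - 1
        · have hjs : j ∈ s := by simp [hs, hS, hji, hjlt]
          simpa [hji, hjlt] using ha'L j hjs
        · have hjl : j = last := by
            rw [hlast, Fin.ext_iff]
            have := j.isLt
            omega
          subst hjl
          simpa [hji, hlast_not] using hL2
  · -- i = last
    have hil : i = last := by
      rw [hlast, Fin.ext_iff]
      have := i.isLt
      omega
    subst hil
    have hSne : S.Nonempty := ⟨⟨0, by omega⟩, by simp [hS]; omega⟩
    have hhl : L h = L (∑ j ∈ S, g j) := by rw [hgZ]; exact hh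
    obtain ⟨a', ha'sum, ha'L⟩ := split_lemma L h3 S hSne g h hhl
    refine ⟨fun j => if (j : ℕ) < m - 1 then a' j else h, ?_, ?_, by simp [hlast_not]⟩
    · rw [zset_iff hm]
      have h1 : (∑ j ∈ S, if (j : ℕ) < m - 1 then a' j else h) = ∑ j ∈ S, a' j := by
        apply Finset.sum_congr rfl
        intro j hj
        have hjlt : (j : ℕ) < m - 1 := by simpa [hS] using hj
        simp [hjlt]
      rw [h1, ha'sum]
      simp [if_neg hlast_not]
    · intro j
      by_cases hjlt : (j : ℕ) < m - 1
      · have hjs : j ∈ S := by simp [hS, hjlt]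
        simpa [hjlt] using ha'L j hjs
      · have hjl : j = last := by
          rw [hlast, Fin.ext_iff]
          have := j.isLt
          omega
        subst hjl
        simpa [hlast_not] using hh
end

section
/- For any finite abelian group G, the Jukes-Cantor labeling function L : G → {0,1}, defined by L(g) = 0 if g = 0 and L(g) = 1 otherwise, is friendly. -/
/-!
Up to the signs `±1` in its defining equation, `Z_m` is the set of zero-sum tuples, and the
Jukes–Cantor label of a tuple records where it vanishes. So it suffices that in a zero-sum tuple
`c` a nonzero entry `c i` can be replaced by any nonzero `d` without changing the sum or the zero
set. Move `d - c i` from another nonzero entry `c j` to `c i`; if this makes `c j` vanish, the sum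
forces a third nonzero entry `c l`, and moving some `a ∉ {0, c l}` from `c l` to `c j` repairs it.
Such an `a` exists because `0`, `c i` and `d` are then three distinct elements.
-/

open Finset

section ZeroSum

variable {ι G : Type} [Fintype ι] [AddCommGroup G]

theorem sum_add_single_sub_single [DecidableEq ι] (c : ι → G) (i j : ι) (a : G) :
    ∑ k, (c + Pi.single i a - Pi.single j a : ι → G) k = ∑ k, c k := by
  simp [sum_add_distrib, sum_sub_distrib]

theorem exists_ne_apply_ne_zero_of_sum_eq_zero {c : ι → G} (hc : ∑ k, c k = 0) {i : ι}
    (hci : c i ≠ 0) : ∃ j ≠ i, c j ≠ 0 := by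
  by_contra! h
  exact hci (by rwa [sum_eq_single i (fun j _ hj => h j hj) (by simp)] at hc)

theorem exists_sum_eq_zero_and_zero_iff_and_apply_eq [DecidableEq ι] {c : ι → G}
    (hc : ∑ k, c k = 0) {i : ι} (hci : c i ≠ 0) {d : G} (hd : d ≠ 0) :
    ∃ c' : ι → G, ∑ k, c' k = 0 ∧ (∀ k, c' k = 0 ↔ c k = 0) ∧ c' i = d := by
  obtain ⟨j, hji, hcj⟩ := exists_ne_apply_ne_zero_of_sum_eq_zero hc hci
  set c₁ := c + Pi.single i (d - c i) - Pi.single j (d - c i)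
  have hc₁ : ∑ k, c₁ k = 0 := by rw [sum_add_single_sub_single, hc]
  have hc₁i : c₁ i = d := by simp [c₁, hji.symm]
  have hc₁j : c₁ j = c j + c i - d := by simp [c₁, hji]; abel
  have hc₁k : ∀ k ≠ j, (c₁ k = 0 ↔ c k = 0) := by
    intro k hkj
    rcases eq_or_ne k i with rfl | hki
    · simp [hc₁i, hd, hci]
    · simp [c₁, hki, hkj]
  rcases ne_or_eq (c₁ j) 0 with hj | hj
  · refine ⟨c₁, hc₁, fun k => ?_, hc₁i⟩
    rcases eq_or_ne k j with rfl | hkj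
    · simp [hj, hcj]
    · exact hc₁k k hkj
  obtain ⟨l, hli, hl⟩ := exists_ne_apply_ne_zero_of_sum_eq_zero hc₁ (hc₁i ▸ hd)
  have hlj : l ≠ j := by rintro rfl; exact hl hj
  have hdci : d ≠ c i := by rintro rfl; exact hcj (by simpa [hc₁j] using hj)
  obtain ⟨a, ha, hal⟩ : ∃ a, a ≠ 0 ∧ a ≠ c₁ l := by
    by_cases h : c₁ l = d
    · exact ⟨c i, hci, h ▸ hdci.symm⟩
    · exact ⟨d, hd, Ne.symm h⟩
  refine ⟨c₁ + Pi.single j a - Pi.single l a, by rw [sum_add_single_sub_single, hc₁],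
    ?_, ?_⟩
  · intro k
    rcases eq_or_ne k j with rfl | hkj
    · simp [hlj.symm, hj, ha, hcj]
    rcases eq_or_ne k l with rfl | hkl
    · simp [hkj, sub_eq_zero, hal.symm, ← hc₁k k hkj, hl]
    · simp [hkj, hkl, hc₁k k hkj]
  · simp [hji.symm, hli.symm, hc₁i]

theorem exists_sum_smul_eq_zero_and_zero_iff_and_apply_eq [DecidableEq ι] (ε : ι → ℤˣ)
    {c : ι → G} (hc : ∑ k, ε k • c k = 0) {i : ι} (hci : c i ≠ 0) {d : G} (hd : d ≠ 0) :
    ∃ c' : ι → G, ∑ k, ε k • c' k = 0 ∧ (∀ k, c' k = 0 ↔ c k = 0) ∧ c' i = d := by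
  have hε : ∀ k (x : G), ε k • ε k • x = x := fun k x => by
    rw [smul_smul, Int.units_mul_self, one_smul]
  obtain ⟨c', hc', hpat, hc'i⟩ := exists_sum_eq_zero_and_zero_iff_and_apply_eq hc
    ((smul_eq_zero_iff_eq _).not.2 hci) ((smul_eq_zero_iff_eq (ε i)).not.2 hd)
  refine ⟨fun k => ε k • c' k, by simpa [hε] using hc', fun k => ?_, by simp [hc'i, hε]⟩
  simpa [smul_eq_zero_iff_eq] using hpat k

end ZeroSum

def zSetSign (m : ℕ) (k : Fin m) : ℤˣ := if (k : ℕ) < m - 1 then 1 else -1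

theorem mem_zSet_iff {G : Type} [AddCommGroup G] {m : ℕ} {g : Fin m → G} :
    g ∈ ZSet G m ↔ ∑ k, zSetSign m k • g k = 0 := by
  have hsign : ∀ k, zSetSign m k • g k = if (k : ℕ) < m - 1 then g k else -g k := fun k => by
    unfold zSetSign; split_ifs <;> simp
  rw [sum_congr rfl fun k _ => hsign k, sum_ite, sum_neg_distrib, add_neg_eq_zero]
  rfl

theorem jukesCantor_labeling_friendly_general (G : Type) [AddCommGroup G]
    [DecidableEq G] :
    Friendly (fun g : G => if g = 0 then (0 : Fin 2) else 1) := by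
  intro m _ g hg i h hL
  have hlabel : ∀ x y : G, ((if x = 0 then (0 : Fin 2) else 1) = if y = 0 then 0 else 1) ↔
      (x = 0 ↔ y = 0) := by
    intro x y; split_ifs <;> simp_all
  rw [hlabel] at hL
  simp only [hlabel]
  by_cases hgi : g i = 0
  · exact ⟨g, hg, fun _ => Iff.rfl, by rw [hL.2 hgi, hgi]⟩
  obtain ⟨g', hg', hpat, rfl⟩ := exists_sum_smul_eq_zero_and_zero_iff_and_apply_eq (zSetSign m)
    (mem_zSet_iff.1 hg) hgi (mt hL.1 hgi)
  exact ⟨g', mem_zSet_iff.2 hg', hpat, rfl⟩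

/-- **Example (the Jukes-Cantor labeling function is friendly).** For any finite abelian
group `G`, the labeling `L(g) = 0` if `g = 0` and `L(g) = 1` otherwise is friendly. -/
theorem jukesCantor_labeling_friendly (G : Type) [AddCommGroup G] [Fintype G]
    [DecidableEq G] :
    Friendly (fun g : G => if g = 0 then (0 : Fin 2) else 1) :=
  jukesCantor_labeling_friendly_general G
end

section
/- The Kimura 2-parameter labeling function L : ℤ/2ℤ × ℤ/2ℤ → {0,1,2}, defined by L((0,0)) = 0, L((0,1)) = 1, and L((1,0)) = L((1,1)) = 2, is friendly. -/
/-!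
A labeling whose fibres are singletons or cosets `{x, x + e}` of an involution `e` is
`m`-friendly as soon as no tuple of `Z_m` has exactly one coordinate `x` with `L (x + e) = L x`:
adding `e` to two such coordinates stays in `Z_m` (because `e + e = 0`) and keeps all labels.
For the Kimura labeling `e = (0, 1)` and these coordinates are those with first component `1`;
in `Z_m` all coordinates sum to `0`, so the number of them is even.
-/

section ZSet

variable {G : Type} [AddCommGroup G] {m : ℕ}

theorem add_mem_ZSet {g δ : Fin m → G} (hg : g ∈ ZSet G m) (hδ : δ ∈ ZSet G m) :
    g + δ ∈ ZSet G m := by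
  simp only [ZSet, Set.mem_ofPred_eq, Pi.add_apply, Finset.sum_add_distrib] at *
  rw [hg, hδ]

theorem single_add_single_mem_ZSet {e : G} (he : e + e = 0) (i j : Fin m) :
    Pi.single i e + Pi.single j e ∈ ZSet G m := by
  simp only [ZSet, Set.mem_ofPred_eq, Pi.add_apply, Finset.sum_add_distrib,
    Finset.sum_pi_single', Finset.mem_filter, Finset.mem_univ, true_and]
  split_ifs <;> simp_all

theorem sum_eq_zero_of_mem_ZSet (hG : ∀ x : G, x + x = 0) {g : Fin m → G}
    (hg : g ∈ ZSet G m) : ∑ k, g k = 0 := by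
  rw [← Finset.sum_filter_add_sum_filter_not _ (fun k : Fin m => (k : ℕ) < m - 1), hg]
  exact hG _

end ZSet

theorem exists_ne_eq_one_of_sum_eq_zero {ι : Type} [Fintype ι] [DecidableEq ι]
    {f : ι → ZMod 2} (hf : ∑ k, f k = 0) {i : ι} (hi : f i = 1) : ∃ j ≠ i, f j = 1 := by
  have hrest : ∑ k ∈ Finset.univ.erase i, f k ≠ 0 := by
    rw [← Finset.add_sum_erase _ _ (Finset.mem_univ i), hi] at hf
    intro h0
    simp [h0] at hf
  obtain ⟨j, hj, hfj⟩ := Finset.exists_ne_zero_of_sum_ne_zero hrest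
  exact ⟨j, Finset.ne_of_mem_erase hj, Fin.eq_one_of_ne_zero (f j) hfj⟩

theorem isMFriendly_of_involution {G 𝓛 : Type} [AddCommGroup G] {L : G → 𝓛} {m : ℕ}
    {e : G} (he : e + e = 0) (hfiber : ∀ x y, L x = L y → x ≠ y → x = y + e)
    (hpair : ∀ g ∈ ZSet G m, ∀ i, L (g i + e) = L (g i) → ∃ j ≠ i, L (g j + e) = L (g j)) :
    IsMFriendly L m := by
  intro g hg i h hL
  obtain rfl | hne := eq_or_ne h (g i)
  · exact ⟨g, hg, fun _ => rfl, rfl⟩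
  obtain rfl := hfiber _ _ hL hne
  obtain ⟨j, hji, hj⟩ := hpair g hg i hL
  refine ⟨g + (Pi.single i e + Pi.single j e),
    add_mem_ZSet hg (single_add_single_mem_ZSet he i j), fun k => ?_, by simp [hji.symm]⟩
  obtain rfl | hki := eq_or_ne k i
  · simpa [hji.symm] using hL
  obtain rfl | hkj := eq_or_ne k j
  · simpa [hki] using hj
  · simp [hki, hkj]

def kimura2Label (g : ZMod 2 × ZMod 2) : Fin 3 :=
  if g = (0, 0) then 0 else if g = (0, 1) then 1 else 2

theorem kimura2Label_eq_add_of_ne :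
    ∀ x y, kimura2Label x = kimura2Label y → x ≠ y → x = y + (0, 1) := by
  unfold kimura2Label; decide

theorem kimura2Label_add_eq_iff : ∀ x, kimura2Label (x + (0, 1)) = kimura2Label x ↔ x.1 = 1 := by
  unfold kimura2Label; decide

theorem kimura2Label_isMFriendly (m : ℕ) : IsMFriendly kimura2Label m := by
  refine isMFriendly_of_involution (by decide) kimura2Label_eq_add_of_ne fun g hg i hi => ?_
  simp only [kimura2Label_add_eq_iff] at hi ⊢
  have hsum : ∑ k, (g k).1 = 0 := by
    rw [← Prod.fst_sum, sum_eq_zero_of_mem_ZSet (by decide) hg]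
    rfl
  exact exists_ne_eq_one_of_sum_eq_zero hsum hi

/-- **Example (the Kimura 2-parameter labeling function is friendly).** The labeling
`L (0,0) = 0`, `L (0,1) = 1`, `L (1,0) = L (1,1) = 2` on `ℤ/2ℤ × ℤ/2ℤ` is friendly. -/
theorem kimura2_labeling_friendly :
    Friendly (fun g : ZMod 2 × ZMod 2 =>
      if g = (0, 0) then (0 : Fin 3) else if g = (0, 1) then 1 else 2) :=
  fun m _ => kimura2Label_isMFriendly m
end
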